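/- arXiv:2212.01563 — 2 statements merged into one kernel-verified Lean document; each statement's English description precedes it below -/
import Mathlib

section
/- Cross-correlation and variance after direct-path subtraction (Theorem 2). Consider samples t_p(ω) = star (v ω) ⬝ᵥ ((Φ_p ω).mulVec (u ω)) + ẑ_p(ω), p ∈ {1,2}, where ẑ_p = n_p − n_d and n_d : Ω → ℂ is the (shared) direct-probing estimation noise. Assume the family (u, v, Φ₁, Φ₂, n₁, n₂, n_d) is mutually independent, everything (entrywise) zero-mean and square-integrable, E[|n₁|²] = E[|n₂|²] = σ², E[n₁ · conj(n₂)] = 0, and E[|n_d|²] = σ_d². Then: (i) E[t₁ · conj(t₂)] = trace(R_u · (E[Φ₂])ᴴ · R_v · E[Φ₁]) + σ_d²; and (ii) for l ∈ {1,2}, E[|t_l|²] = E[trace(R_u · (Φ_l)ᴴ · R_v · Φ_l)] + σ_d² + σ². Consequently the correlation coefficient ρ = E[t₁ · conj(t₂)] / E[|t_l|²] equals (trace(R_u · (E[Φ₂])ᴴ · R_v · E[Φ₁]) + σ_d²) / (E[trace(R_u · (Φ_l)ᴴ · R_v · Φ_l)] + σ_d² + σ²). -/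
open MeasureTheory ProbabilityTheory Matrix Complex

/-- Borel-type measurable space on matrices, induced from the pi-type structure. -/
noncomputable instance matrixMeasurableSpace {m n α : Type*} [MeasurableSpace α] :
    MeasurableSpace (Matrix m n α) :=
  inferInstanceAs (MeasurableSpace (m → n → α))

/-
Write `t p = s p + z p` with `s p = vᴴ Φ_p u` and `z p = n p - n_d`. Peeling the product law one
factor at a time makes `u` independent of everything else, `v` independent of the phase shifts and
noises, `Φ₁` independent of `Φ₂`, and each `n p` independent of `n_d`. As `u` has mean zero and
enters `s p` linearly, `E[s a · conj (z b)] = 0`, so `E[t a · conj (t b)]` splits into the signal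
part `E[s a · conj (s b)]`, the noise part `E[n a · conj (n b)]` and the common `σ_d²`. Expanding
`s a · conj (s b)` into monomials `u_j conj u_l · conj v_i v_k · (Φ_a)_ij conj (Φ_b)_kl` and
factoring each expectation gives `E[trace (R_u Φ_bᴴ R_v Φ_a)]`, which for `a ≠ b` factors once
more into `trace (R_u E[Φ_b]ᴴ R_v E[Φ_a])`.
-/

open scoped ENNReal

section Algebra

variable {R ι κ : Type*} [CommRing R] [StarRing R] [Fintype ι] [Fintype κ]

theorem trace_mul_conjTranspose_mul_mul (C : Matrix κ κ R) (D : Matrix ι ι R)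
    (A B : Matrix ι κ R) :
    (C * Bᴴ * D * A).trace = ∑ i, ∑ j, ∑ k, ∑ l, C j l * (D k i * (A i j * star (B k l))) := by
  simp only [trace, diag_apply, mul_apply, conjTranspose_apply, Finset.sum_mul]
  rw [Finset.sum_comm]
  refine Finset.sum_congr rfl fun i _ => Finset.sum_congr rfl fun j _ =>
    Finset.sum_congr rfl fun k _ => Finset.sum_congr rfl fun l _ => by ring

theorem dotProduct_mulVec_mul_star_dotProduct_mulVec (x : κ → R) (y : ι → R)
    (A B : Matrix ι κ R) :
    (star y ⬝ᵥ A *ᵥ x) * star (star y ⬝ᵥ B *ᵥ x) =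
      ∑ i, ∑ j, ∑ k, ∑ l, x j * star (x l) * (star (y i) * y k * (A i j * star (B k l))) := by
  simp only [dotProduct, mulVec, Pi.star_apply, Finset.mul_sum]
  simp only [star_sum, star_mul', star_star, Finset.sum_mul]
  simp only [Finset.mul_sum]
  refine Finset.sum_congr rfl fun i _ => Finset.sum_congr rfl fun j _ =>
    Finset.sum_congr rfl fun k _ => Finset.sum_congr rfl fun l _ => by ring

end Algebra

section Probability

variable {Ω 𝕜 : Type*} [MeasurableSpace Ω] [RCLike 𝕜] {μ : Measure Ω}

variable (μ) in
noncomputable def correlationMatrix {ι : Type*} (X : Ω → ι → 𝕜) : Matrix ι ι 𝕜 :=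
  Matrix.of fun i j => ∫ ω, X ω i * star (X ω j) ∂μ

variable (μ) in
noncomputable def meanMatrix {ι κ : Type*} (A : Ω → Matrix ι κ 𝕜) : Matrix ι κ 𝕜 :=
  Matrix.of fun i j => ∫ ω, A ω i j ∂μ

theorem indepFun_and_map_eq_of_map_prodMk_eq_prod [IsProbabilityMeasure μ] {α β : Type*}
    [MeasurableSpace α] [MeasurableSpace β] {X : Ω → α} {Y : Ω → β} {ν : Measure β} [SFinite ν]
    (hX : Measurable X) (hY : Measurable Y) (h : μ.map (fun ω => (X ω, Y ω)) = (μ.map X).prod ν) :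
    X ⟂ᵢ[μ] Y ∧ μ.map Y = ν := by
  have hmap : μ.map Y = ν := by
    have h' := congrArg (Measure.map Prod.snd) h
    rwa [Measure.map_map measurable_snd (hX.prodMk hY), Measure.map_snd_prod,
      Measure.map_apply hX MeasurableSet.univ, Set.preimage_univ, measure_univ, one_smul] at h'
  exact ⟨(indepFun_iff_map_prod_eq_prod_map_map hX.aemeasurable hY.aemeasurable).2 (hmap ▸ h),
    hmap⟩

theorem ProbabilityTheory.IndepFun.comp_right {α β γ : Type*} [MeasurableSpace α]
    [MeasurableSpace β] [MeasurableSpace γ] {X : Ω → α} {Y : Ω → β} (hXY : X ⟂ᵢ[μ] Y)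
    {g : β → γ} (hg : Measurable g) : X ⟂ᵢ[μ] fun ω => g (Y ω) :=
  hXY.comp measurable_id hg

theorem integral_sum_sum_sum_sum {E α β γ δ : Type*} [NormedAddCommGroup E] [NormedSpace ℝ E]
    [Fintype α] [Fintype β] [Fintype γ] [Fintype δ] {f : α → β → γ → δ → Ω → E}
    (hf : ∀ a b c d, Integrable (f a b c d) μ) :
    ∫ ω, ∑ a, ∑ b, ∑ c, ∑ d, f a b c d ω ∂μ = ∑ a, ∑ b, ∑ c, ∑ d, ∫ ω, f a b c d ω ∂μ := by
  rw [integral_finsetSum _ fun a _ => integrable_finsetSum _ fun b _ =>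
    integrable_finsetSum _ fun c _ => integrable_finsetSum _ fun d _ => hf a b c d]
  refine Finset.sum_congr rfl fun a _ => ?_
  rw [integral_finsetSum _ fun b _ => integrable_finsetSum _ fun c _ =>
    integrable_finsetSum _ fun d _ => hf a b c d]
  refine Finset.sum_congr rfl fun b _ => ?_
  rw [integral_finsetSum _ fun c _ => integrable_finsetSum _ fun d _ => hf a b c d]
  exact Finset.sum_congr rfl fun c _ => integral_finsetSum _ fun d _ => hf a b c d

theorem ProbabilityTheory.IndepFun.memLp_two_mul {X Y : Ω → 𝕜} (hXY : X ⟂ᵢ[μ] Y) (hX : MemLp X 2 μ)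
    (hY : MemLp Y 2 μ) : MemLp (fun ω => X ω * Y ω) 2 μ := by
  rw [memLp_two_iff_integrable_sq_norm (f := fun ω => X ω * Y ω) (hX.1.mul hY.1)]
  have h := (hXY.comp (φ := fun z : 𝕜 => ‖z‖ ^ 2) (ψ := fun z : 𝕜 => ‖z‖ ^ 2) (by fun_prop)
    (by fun_prop)).integrable_mul ((memLp_two_iff_integrable_sq_norm hX.1).1 hX)
    ((memLp_two_iff_integrable_sq_norm hY.1).1 hY)
  simp only [norm_mul, mul_pow]
  exact h

theorem ProbabilityTheory.IndepFun.integral_mul_star_eq_zero {X Y : Ω → 𝕜} (hXY : X ⟂ᵢ[μ] Y)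
    (hX : AEStronglyMeasurable X μ) (hY : AEStronglyMeasurable Y μ) (hY0 : ∫ ω, Y ω ∂μ = 0) :
    ∫ ω, X ω * star (Y ω) ∂μ = 0 := by
  calc ∫ ω, X ω * star (Y ω) ∂μ = (∫ ω, X ω ∂μ) * ∫ ω, star (Y ω) ∂μ :=
        (hXY.comp measurable_id continuous_star.measurable).integral_fun_mul_eq_mul_integral hX
          hY.star
    _ = 0 := by simp [integral_conj, hY0]

theorem integral_add_mul_star_add {S₁ S₂ Z₁ Z₂ : Ω → 𝕜} (hS₁ : MemLp S₁ 2 μ) (hS₂ : MemLp S₂ 2 μ)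
    (hZ₁ : MemLp Z₁ 2 μ) (hZ₂ : MemLp Z₂ 2 μ) (h₁₂ : ∫ ω, S₁ ω * star (Z₂ ω) ∂μ = 0)
    (h₂₁ : ∫ ω, S₂ ω * star (Z₁ ω) ∂μ = 0) :
    ∫ ω, (S₁ ω + Z₁ ω) * star (S₂ ω + Z₂ ω) ∂μ =
      (∫ ω, S₁ ω * star (S₂ ω) ∂μ) + ∫ ω, Z₁ ω * star (Z₂ ω) ∂μ := by
  have hZS : ∫ ω, Z₁ ω * star (S₂ ω) ∂μ = 0 := by
    have h := integral_conj (μ := μ) (f := fun ω => S₂ ω * star (Z₁ ω))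
    rw [h₂₁, map_zero] at h
    refine (integral_congr_ae (ae_of_all _ fun ω => ?_)).trans h
    simp [mul_comm]
  have hint {X Y : Ω → 𝕜} (hX : MemLp X 2 μ) (hY : MemLp Y 2 μ) :
      Integrable (fun ω => X ω * star (Y ω)) μ :=
    hX.integrable_mul hY.star
  simp only [star_add, mul_add, add_mul]
  rw [integral_add (f := fun ω => S₁ ω * star (S₂ ω) + Z₁ ω * star (S₂ ω))
      (g := fun ω => S₁ ω * star (Z₂ ω) + Z₁ ω * star (Z₂ ω))
      ((hint hS₁ hS₂).add (hint hZ₁ hS₂)) ((hint hS₁ hZ₂).add (hint hZ₁ hZ₂)),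
    integral_add (hint hS₁ hS₂) (hint hZ₁ hS₂), integral_add (hint hS₁ hZ₂) (hint hZ₁ hZ₂),
    h₁₂, hZS, add_zero, zero_add]

theorem integral_sub_mul_star_sub {X Y Z : Ω → 𝕜} (hX : MemLp X 2 μ) (hY : MemLp Y 2 μ)
    (hZ : MemLp Z 2 μ) (hXZ : ∫ ω, X ω * star (Z ω) ∂μ = 0)
    (hYZ : ∫ ω, Y ω * star (Z ω) ∂μ = 0) :
    ∫ ω, (X ω - Z ω) * star (Y ω - Z ω) ∂μ =
      (∫ ω, X ω * star (Y ω) ∂μ) + ∫ ω, Z ω * star (Z ω) ∂μ := by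
  have h := integral_add_mul_star_add hX hY hZ.neg hZ.neg
    (by simp only [Pi.neg_apply, star_neg, mul_neg, integral_neg, hXZ, neg_zero])
    (by simp only [Pi.neg_apply, star_neg, mul_neg, integral_neg, hYZ, neg_zero])
  simpa [← sub_eq_add_neg] using h

section BilinearForm

variable {ι κ : Type*} [Fintype ι] [Fintype κ] {U : Ω → κ → 𝕜} {V : Ω → ι → 𝕜}
  {A B : Ω → Matrix ι κ 𝕜}

theorem memLp_two_dotProduct_mulVec (hUVA : U ⟂ᵢ[μ] fun ω => (V ω, A ω))
    (hU : ∀ j, MemLp (fun ω => U ω j) 2 μ) (hV : ∀ i, MemLp (fun ω => V ω i) 2 μ)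
    (hA : ∀ i j, MemLp (fun ω => A ω i j) ∞ μ) :
    MemLp (fun ω => star (V ω) ⬝ᵥ A ω *ᵥ U ω) 2 μ := by
  have hexp : ∀ ω, star (V ω) ⬝ᵥ A ω *ᵥ U ω = ∑ i, ∑ j, star (V ω i) * A ω i j * U ω j := by
    simp [dotProduct, mulVec, Finset.mul_sum, mul_assoc]
  simp_rw [hexp]
  refine memLp_finsetSum _ fun i _ => memLp_finsetSum _ fun j _ => ?_
  have hind : (fun ω => star (V ω i) * A ω i j) ⟂ᵢ[μ] fun ω => U ω j :=
    hUVA.symm.comp (φ := fun x : (ι → 𝕜) × Matrix ι κ 𝕜 => star (x.1 i) * x.2 i j)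
      (ψ := fun x : κ → 𝕜 => x j) (by fun_prop) (by fun_prop)
  exact hind.memLp_two_mul ((hA i j).mul (hV i).star) (hU j)

theorem integral_dotProduct_mulVec_mul_eq_zero {W : Ω → 𝕜}
    (hUVAW : U ⟂ᵢ[μ] fun ω => (V ω, A ω, W ω)) (hU : ∀ j, Integrable (fun ω => U ω j) μ)
    (hU0 : ∀ j, ∫ ω, U ω j ∂μ = 0) (hV : ∀ i, MemLp (fun ω => V ω i) 2 μ)
    (hA : ∀ i j, MemLp (fun ω => A ω i j) ∞ μ) (hW : MemLp W 2 μ) :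
    ∫ ω, (star (V ω) ⬝ᵥ A ω *ᵥ U ω) * W ω ∂μ = 0 := by
  have hexp : ∀ ω, (star (V ω) ⬝ᵥ A ω *ᵥ U ω) * W ω =
      ∑ j, (∑ i, star (V ω i) * A ω i j * W ω) * U ω j := by
    intro ω
    simp only [dotProduct, mulVec, Pi.star_apply, Finset.mul_sum, Finset.sum_mul]
    rw [Finset.sum_comm]
    exact Finset.sum_congr rfl fun j _ => Finset.sum_congr rfl fun i _ => by ring
  have hind : ∀ j, (fun ω => ∑ i, star (V ω i) * A ω i j * W ω) ⟂ᵢ[μ] fun ω => U ω j :=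
    fun j => hUVAW.symm.comp
      (φ := fun x : (ι → 𝕜) × Matrix ι κ 𝕜 × 𝕜 => ∑ i, star (x.1 i) * x.2.1 i j * x.2.2)
      (ψ := fun x : κ → 𝕜 => x j) (by fun_prop) (by fun_prop)
  have hG : ∀ j, Integrable (fun ω => ∑ i, star (V ω i) * A ω i j * W ω) μ :=
    fun j => integrable_finsetSum _ fun i _ =>
      (((hA i j).mul (hV i).star : MemLp _ 2 μ)).integrable_mul hW
  have hterm : ∀ j, Integrable (fun ω => (∑ i, star (V ω i) * A ω i j * W ω) * U ω j) μ :=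
    fun j => (hind j).integrable_mul (hG j) (hU j)
  simp_rw [hexp]
  rw [integral_finsetSum _ fun j _ => hterm j]
  refine Finset.sum_eq_zero fun j _ => ?_
  rw [(hind j).integral_fun_mul_eq_mul_integral (hG j).1 (hU j).1, hU0 j, mul_zero]

theorem integral_trace_mul_conjTranspose_mul_mul [IsFiniteMeasure μ] (C : Matrix κ κ 𝕜)
    (D : Matrix ι ι 𝕜) (hA : ∀ i j, MemLp (fun ω => A ω i j) ∞ μ)
    (hB : ∀ i j, MemLp (fun ω => B ω i j) ∞ μ) :
    ∫ ω, (C * (B ω)ᴴ * D * A ω).trace ∂μ =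
      ∑ i, ∑ j, ∑ k, ∑ l, C j l * (D k i * ∫ ω, A ω i j * star (B ω k l) ∂μ) := by
  have hterm : ∀ i j k l,
      Integrable (fun ω => C j l * (D k i * (A ω i j * star (B ω k l)))) μ := fun i j k l =>
    ((((hB k l).star.mul (hA i j)).integrable le_top).const_mul _).const_mul _
  simp_rw [trace_mul_conjTranspose_mul_mul]
  rw [integral_sum_sum_sum_sum hterm]
  simp only [integral_const_mul]

theorem integral_dotProduct_mulVec_mul_star [IsFiniteMeasure μ]
    (hUVAB : U ⟂ᵢ[μ] fun ω => (V ω, A ω, B ω)) (hVAB : V ⟂ᵢ[μ] fun ω => (A ω, B ω))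
    (hU : ∀ j, MemLp (fun ω => U ω j) 2 μ) (hV : ∀ i, MemLp (fun ω => V ω i) 2 μ)
    (hA : ∀ i j, MemLp (fun ω => A ω i j) ∞ μ) (hB : ∀ i j, MemLp (fun ω => B ω i j) ∞ μ) :
    ∫ ω, (star (V ω) ⬝ᵥ A ω *ᵥ U ω) * star (star (V ω) ⬝ᵥ B ω *ᵥ U ω) ∂μ =
      ∫ ω, (correlationMatrix μ U * (B ω)ᴴ * correlationMatrix μ V * A ω).trace ∂μ := by
  rw [integral_trace_mul_conjTranspose_mul_mul _ _ hA hB]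
  simp_rw [dotProduct_mulVec_mul_star_dotProduct_mulVec]
  have hAB : ∀ i j k l, Integrable (fun ω => A ω i j * star (B ω k l)) μ :=
    fun i j k l => ((hB k l).star.mul (hA i j)).integrable le_top
  have hVV : ∀ i k, Integrable (fun ω => star (V ω i) * V ω k) μ :=
    fun i k => (hV i).star.integrable_mul (hV k)
  have hUU : ∀ j l, Integrable (fun ω => U ω j * star (U ω l)) μ :=
    fun j l => (hU j).integrable_mul (hU l).star
  have hVVAB : ∀ i j k l,
      Integrable (fun ω => star (V ω i) * V ω k * (A ω i j * star (B ω k l))) μ := fun i j k l =>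
    (hVV i k).mul_of_top_left ((hB k l).star.mul (hA i j))
  have hindV : ∀ i j k l, (fun ω => star (V ω i) * V ω k) ⟂ᵢ[μ]
      fun ω => A ω i j * star (B ω k l) := fun i j k l =>
    hVAB.comp (φ := fun x : ι → 𝕜 => star (x i) * x k)
      (ψ := fun x : Matrix ι κ 𝕜 × Matrix ι κ 𝕜 => x.1 i j * star (x.2 k l)) (by fun_prop)
      (by fun_prop)
  have hindU : ∀ i j k l, (fun ω => U ω j * star (U ω l)) ⟂ᵢ[μ]
      fun ω => star (V ω i) * V ω k * (A ω i j * star (B ω k l)) := fun i j k l =>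
    hUVAB.comp (φ := fun x : κ → 𝕜 => x j * star (x l))
      (ψ := fun x : (ι → 𝕜) × Matrix ι κ 𝕜 × Matrix ι κ 𝕜 =>
        star (x.1 i) * x.1 k * (x.2.1 i j * star (x.2.2 k l))) (by fun_prop) (by fun_prop)
  have hterm : ∀ i j k l, Integrable (fun ω =>
      U ω j * star (U ω l) * (star (V ω i) * V ω k * (A ω i j * star (B ω k l)))) μ :=
    fun i j k l => (hindU i j k l).integrable_mul (hUU j l) (hVVAB i j k l)
  rw [integral_sum_sum_sum_sum hterm]
  refine Finset.sum_congr rfl fun i _ => Finset.sum_congr rfl fun j _ =>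
    Finset.sum_congr rfl fun k _ => Finset.sum_congr rfl fun l _ => ?_
  rw [(hindU i j k l).integral_fun_mul_eq_mul_integral (hUU j l).1 (hVVAB i j k l).1,
    (hindV i j k l).integral_fun_mul_eq_mul_integral (hVV i k).1 (hAB i j k l).1]
  simp only [correlationMatrix, of_apply, mul_comm (star (V _ _))]

theorem ProbabilityTheory.IndepFun.integral_trace_mul_conjTranspose_mul_mul [IsFiniteMeasure μ]
    (hAB : A ⟂ᵢ[μ] B) (C : Matrix κ κ 𝕜) (D : Matrix ι ι 𝕜)
    (hA : ∀ i j, MemLp (fun ω => A ω i j) ∞ μ) (hB : ∀ i j, MemLp (fun ω => B ω i j) ∞ μ) :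
    ∫ ω, (C * (B ω)ᴴ * D * A ω).trace ∂μ =
      (C * (meanMatrix μ B)ᴴ * D * meanMatrix μ A).trace := by
  rw [_root_.integral_trace_mul_conjTranspose_mul_mul C D hA hB, trace_mul_conjTranspose_mul_mul]
  refine Finset.sum_congr rfl fun i _ => Finset.sum_congr rfl fun j _ =>
    Finset.sum_congr rfl fun k _ => Finset.sum_congr rfl fun l _ => ?_
  have hind : (fun ω => A ω i j) ⟂ᵢ[μ] fun ω => star (B ω k l) :=
    hAB.comp (φ := fun M : Matrix ι κ 𝕜 => M i j) (ψ := fun M : Matrix ι κ 𝕜 => star (M k l))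
      (by fun_prop) (by fun_prop)
  rw [hind.integral_fun_mul_eq_mul_integral (hA i j).1 (hB k l).1.star]
  simp [meanMatrix, integral_conj]

end BilinearForm

theorem indepFun_probing_of_map_eq_prod [IsProbabilityMeasure μ] {α β γ δ : Type*}
    [MeasurableSpace α] [MeasurableSpace β] [MeasurableSpace γ] [MeasurableSpace δ]
    {u : Ω → α} {v : Ω → β} {Φ : Fin 2 → Ω → γ} {n : Fin 2 → Ω → δ} {nd : Ω → δ}
    (hu : Measurable u) (hv : Measurable v) (hΦ : ∀ p, Measurable (Φ p))
    (hn : ∀ p, Measurable (n p)) (hnd : Measurable nd)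
    (h : μ.map (fun ω => (u ω, v ω, Φ 0 ω, Φ 1 ω, n 0 ω, n 1 ω, nd ω)) =
      (μ.map u).prod ((μ.map v).prod ((μ.map (Φ 0)).prod ((μ.map (Φ 1)).prod
        ((μ.map (n 0)).prod ((μ.map (n 1)).prod (μ.map nd))))))) :
    (u ⟂ᵢ[μ] fun ω => (v ω, (fun p => Φ p ω), (fun p => n p ω), nd ω)) ∧
      (v ⟂ᵢ[μ] fun ω p => Φ p ω) ∧ Φ 0 ⟂ᵢ[μ] Φ 1 ∧ ∀ p, n p ⟂ᵢ[μ] nd := by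
  obtain ⟨hu, h₁⟩ := indepFun_and_map_eq_of_map_prodMk_eq_prod hu (by fun_prop) h
  obtain ⟨hv, h₂⟩ := indepFun_and_map_eq_of_map_prodMk_eq_prod hv (by fun_prop) h₁
  obtain ⟨hΦ₀, h₃⟩ := indepFun_and_map_eq_of_map_prodMk_eq_prod (hΦ 0) (by fun_prop) h₂
  obtain ⟨-, h₄⟩ := indepFun_and_map_eq_of_map_prodMk_eq_prod (hΦ 1) (by fun_prop) h₃
  obtain ⟨hn₀, h₅⟩ := indepFun_and_map_eq_of_map_prodMk_eq_prod (hn 0) (by fun_prop) h₄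
  obtain ⟨hn₁, -⟩ := indepFun_and_map_eq_of_map_prodMk_eq_prod (hn 1) hnd h₅
  refine ⟨?_, ?_, hΦ₀.comp measurable_id measurable_fst,
    Fin.forall_fin_two.2 ⟨hn₀.comp measurable_id measurable_snd, hn₁⟩⟩
  · convert hu.comp_right (g := fun y => (y.1,
      MeasurableEquiv.finTwoArrow.symm (y.2.1, y.2.2.1),
      MeasurableEquiv.finTwoArrow.symm (y.2.2.2.1, y.2.2.2.2.1), y.2.2.2.2.2)) (by fun_prop)
      using 1
    funext ω
    refine Prod.ext rfl (Prod.ext ?_ (Prod.ext ?_ rfl)) <;> funext p <;> fin_cases p <;> rfl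
  · convert hv.comp_right (g := fun y => MeasurableEquiv.finTwoArrow.symm (y.1, y.2.1))
      (by fun_prop) using 1
    funext ω p
    fin_cases p <;> rfl

theorem memLp_top_apply_of_unit_diagonal {ι : Type*} {A : Ω → Matrix ι ι 𝕜} (hA : Measurable A)
    (hdiag : ∀ ω i j, i ≠ j → A ω i j = 0) (hunit : ∀ ω i, ‖A ω i i‖ = 1) (i j : ι) :
    MemLp (fun ω => A ω i j) ∞ μ := by
  refine memLp_top_of_bound (by fun_prop) 1 (ae_of_all _ fun ω => ?_)
  rcases eq_or_ne i j with rfl | hij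
  · exact (hunit ω i).le
  · simp [hdiag ω i j hij]

theorem integral_sample_mul_star_sample [IsFiniteMeasure μ] {P ι κ : Type*} [Fintype ι] [Fintype κ]
    {u : Ω → κ → 𝕜} {v : Ω → ι → 𝕜} {Φ : P → Ω → Matrix ι κ 𝕜} {n : P → Ω → 𝕜} {nd : Ω → 𝕜}
    (hu : u ⟂ᵢ[μ] fun ω => (v ω, (fun p => Φ p ω), (fun p => n p ω), nd ω))
    (hn : ∀ p, n p ⟂ᵢ[μ] nd) (huL2 : ∀ j, MemLp (fun ω => u ω j) 2 μ)
    (hvL2 : ∀ i, MemLp (fun ω => v ω i) 2 μ) (hΦ : ∀ p i j, MemLp (fun ω => Φ p ω i j) ∞ μ)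
    (hnL2 : ∀ p, MemLp (n p) 2 μ) (hndL2 : MemLp nd 2 μ) (hu0 : ∀ j, ∫ ω, u ω j ∂μ = 0)
    (hnd0 : ∫ ω, nd ω ∂μ = 0) (a b : P) :
    ∫ ω, (star (v ω) ⬝ᵥ Φ a ω *ᵥ u ω + (n a ω - nd ω)) *
        star (star (v ω) ⬝ᵥ Φ b ω *ᵥ u ω + (n b ω - nd ω)) ∂μ =
      (∫ ω, (star (v ω) ⬝ᵥ Φ a ω *ᵥ u ω) * star (star (v ω) ⬝ᵥ Φ b ω *ᵥ u ω) ∂μ) +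
        (∫ ω, n a ω * star (n b ω) ∂μ) + ∫ ω, nd ω * star (nd ω) ∂μ := by
  have hs : ∀ p, MemLp (fun ω => star (v ω) ⬝ᵥ Φ p ω *ᵥ u ω) 2 μ := fun p =>
    memLp_two_dotProduct_mulVec (hu.comp_right (g := fun y => (y.1, y.2.1 p)) (by fun_prop))
      huL2 hvL2 (hΦ p)
  have hz : ∀ p, MemLp (fun ω => n p ω - nd ω) 2 μ := fun p => (hnL2 p).sub hndL2
  have hsz : ∀ p q, ∫ ω, (star (v ω) ⬝ᵥ Φ p ω *ᵥ u ω) * star (n q ω - nd ω) ∂μ = 0 :=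
    fun p q => integral_dotProduct_mulVec_mul_eq_zero
      (hu.comp_right (g := fun y => (y.1, y.2.1 p, star (y.2.2.1 q - y.2.2.2))) (by fun_prop))
      (fun j => (huL2 j).integrable one_le_two) hu0 hvL2 (hΦ p) (hz q).star
  have hnnd : ∀ p, ∫ ω, n p ω * star (nd ω) ∂μ = 0 := fun p =>
    (hn p).integral_mul_star_eq_zero (hnL2 p).1 hndL2.1 hnd0
  rw [integral_add_mul_star_add (hs a) (hs b) (hz a) (hz b) (hsz a b) (hsz b a),
    integral_sub_mul_star_sub (hnL2 a) (hnL2 b) hndL2 (hnnd a) (hnnd b), add_assoc]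

end Probability

theorem crossCorrelation_variance_IRS_samples_direct_subtracted_general
    {Ω : Type*} [MeasurableSpace Ω] (μ : Measure Ω) [IsProbabilityMeasure μ]
    {N : ℕ}
    (u v : Ω → Fin N → ℂ)
    (Φ : Fin 2 → Ω → Matrix (Fin N) (Fin N) ℂ)
    (n : Fin 2 → Ω → ℂ) (nd : Ω → ℂ)
    (t : Fin 2 → Ω → ℂ)
    (ht : ∀ p ω, t p ω = star (v ω) ⬝ᵥ ((Φ p ω).mulVec (u ω)) + (n p ω - nd ω))
    -- measurability
    (hum : Measurable u) (hvm : Measurable v)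
    (hΦm : ∀ p, Measurable (Φ p)) (hnm : ∀ p, Measurable (n p)) (hndm : Measurable nd)
    -- each `Φ p ω` is diagonal with unit-modulus diagonal entries
    (hΦdiag : ∀ p ω, ∀ i j : Fin N, i ≠ j → Φ p ω i j = 0)
    (hΦunit : ∀ p ω, ∀ i : Fin N, ‖Φ p ω i i‖ = 1)
    -- square integrability
    (hnL2 : ∀ p, MemLp (n p) 2 μ) (hndL2 : MemLp nd 2 μ)
    (huL2 : ∀ i, MemLp (fun ω => u ω i) 2 μ)
    (hvL2 : ∀ i, MemLp (fun ω => v ω i) 2 μ)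
    -- zero means
    (hndmean : ∫ ω, nd ω ∂μ = 0)
    (humean : ∀ i, ∫ ω, u ω i ∂μ = 0)
    -- second moments of the noises
    (σ2 σd2 : ℝ)
    (hσ : ∀ p, ∫ ω, n p ω * star (n p ω) ∂μ = (σ2 : ℂ))
    (hnuncorr : ∫ ω, n 0 ω * star (n 1 ω) ∂μ = 0)
    (hσd : ∫ ω, nd ω * star (nd ω) ∂μ = (σd2 : ℂ))
    -- covariance matrices of the IRS channel vectors
    (Ru Rv : Matrix (Fin N) (Fin N) ℂ)
    (hRu : ∀ i j, Ru i j = ∫ ω, u ω i * star (u ω j) ∂μ)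
    (hRv : ∀ i j, Rv i j = ∫ ω, v ω i * star (v ω j) ∂μ)
    -- entrywise expectations of the phase-shift matrices
    (EΦ : Fin 2 → Matrix (Fin N) (Fin N) ℂ)
    (hEΦ : ∀ p i j, EΦ p i j = ∫ ω, Φ p ω i j ∂μ)
    -- mutual independence of the family (u, v, Φ₁, Φ₂, n₁, n₂, n_d):
    -- the joint law is the product of the individual laws
    (hindep :
      μ.map (fun ω => (u ω, v ω, Φ 0 ω, Φ 1 ω, n 0 ω, n 1 ω, nd ω)) =
        (μ.map u).prod ((μ.map v).prod ((μ.map (Φ 0)).prod ((μ.map (Φ 1)).prod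
          ((μ.map (n 0)).prod ((μ.map (n 1)).prod (μ.map nd))))))) :
    -- (i) cross-correlation
    (∫ ω, t 0 ω * star (t 1 ω) ∂μ
        = (Ru * (EΦ 1)ᴴ * Rv * EΦ 0).trace + (σd2 : ℂ)) ∧
    -- (ii) variance of each sample
    (∀ l : Fin 2, ∫ ω, t l ω * star (t l ω) ∂μ
        = (∫ ω, (Ru * (Φ l ω)ᴴ * Rv * Φ l ω).trace ∂μ) + (σd2 : ℂ) + (σ2 : ℂ)) ∧
    -- consequence: the correlation coefficient
    (∀ l : Fin 2,
      (∫ ω, t 0 ω * star (t 1 ω) ∂μ) / (∫ ω, t l ω * star (t l ω) ∂μ)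
        = ((Ru * (EΦ 1)ᴴ * Rv * EΦ 0).trace + (σd2 : ℂ))
          / ((∫ ω, (Ru * (Φ l ω)ᴴ * Rv * Φ l ω).trace ∂μ) + (σd2 : ℂ) + (σ2 : ℂ))) := by
  obtain rfl : Ru = correlationMatrix μ u := Matrix.ext hRu
  obtain rfl : Rv = correlationMatrix μ v := Matrix.ext hRv
  obtain rfl : EΦ = fun p => meanMatrix μ (Φ p) := funext fun p => Matrix.ext (hEΦ p)
  obtain ⟨hu, hv, hΦ, hn⟩ := indepFun_probing_of_map_eq_prod hum hvm hΦm hnm hndm hindep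
  have hΦbdd : ∀ p i j, MemLp (fun ω => Φ p ω i j) ∞ μ := fun p =>
    memLp_top_apply_of_unit_diagonal (hΦm p) (hΦdiag p) (hΦunit p)
  have hcorr : ∀ a b, ∫ ω, t a ω * star (t b ω) ∂μ =
      (∫ ω, (star (v ω) ⬝ᵥ Φ a ω *ᵥ u ω) * star (star (v ω) ⬝ᵥ Φ b ω *ᵥ u ω) ∂μ) +
        (∫ ω, n a ω * star (n b ω) ∂μ) + σd2 := fun a b => by
    simp_rw [ht]
    rw [integral_sample_mul_star_sample hu hn huL2 hvL2 hΦbdd hnL2 hndL2 humean hndmean, hσd]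
  have hsig : ∀ a b,
      ∫ ω, (star (v ω) ⬝ᵥ Φ a ω *ᵥ u ω) * star (star (v ω) ⬝ᵥ Φ b ω *ᵥ u ω) ∂μ =
        ∫ ω, (correlationMatrix μ u * (Φ b ω)ᴴ * correlationMatrix μ v * Φ a ω).trace ∂μ :=
    fun a b => integral_dotProduct_mulVec_mul_star
      (hu.comp_right (g := fun y => (y.1, y.2.1 a, y.2.1 b)) (by fun_prop))
      (hv.comp_right (g := fun y => (y a, y b)) (by fun_prop)) huL2 hvL2 (hΦbdd a) (hΦbdd b)
  have h₀₁ : ∫ ω, t 0 ω * star (t 1 ω) ∂μ =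
      (correlationMatrix μ u * (meanMatrix μ (Φ 1))ᴴ * correlationMatrix μ v *
        meanMatrix μ (Φ 0)).trace + σd2 := by
    rw [hcorr, hsig, hΦ.integral_trace_mul_conjTranspose_mul_mul _ _ (hΦbdd 0) (hΦbdd 1),
      hnuncorr, add_zero]
  have hll : ∀ l, ∫ ω, t l ω * star (t l ω) ∂μ =
      (∫ ω, (correlationMatrix μ u * (Φ l ω)ᴴ * correlationMatrix μ v * Φ l ω).trace ∂μ) +
        σd2 + σ2 := fun l => by
    rw [hcorr, hsig, hσ, add_right_comm]
  exact ⟨h₀₁, hll, fun l => by rw [h₀₁, hll]⟩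

/-- **Theorem 2** (cross-correlation and variance of IRS-assisted channel samples
after direct-path subtraction).  The samples are
`t p ω = (v ω)ᴴ ⬝ (Φ p ω) ⬝ (u ω) + (n p ω - n_d ω)`, where `n_d` is the shared
direct-probing estimation noise. -/
theorem crossCorrelation_variance_IRS_samples_direct_subtracted
    {Ω : Type*} [MeasurableSpace Ω] (μ : Measure Ω) [IsProbabilityMeasure μ]
    {N : ℕ} (hN : 1 ≤ N)
    (u v : Ω → Fin N → ℂ)
    (Φ : Fin 2 → Ω → Matrix (Fin N) (Fin N) ℂ)
    (n : Fin 2 → Ω → ℂ) (nd : Ω → ℂ)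
    (t : Fin 2 → Ω → ℂ)
    (ht : ∀ p ω, t p ω = star (v ω) ⬝ᵥ ((Φ p ω).mulVec (u ω)) + (n p ω - nd ω))
    -- measurability
    (hum : Measurable u) (hvm : Measurable v)
    (hΦm : ∀ p, Measurable (Φ p)) (hnm : ∀ p, Measurable (n p)) (hndm : Measurable nd)
    -- each `Φ p ω` is diagonal with unit-modulus diagonal entries
    (hΦdiag : ∀ p ω, ∀ i j : Fin N, i ≠ j → Φ p ω i j = 0)
    (hΦunit : ∀ p ω, ∀ i : Fin N, ‖Φ p ω i i‖ = 1)
    -- square integrability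
    (hnL2 : ∀ p, MemLp (n p) 2 μ) (hndL2 : MemLp nd 2 μ)
    (huL2 : ∀ i, MemLp (fun ω => u ω i) 2 μ)
    (hvL2 : ∀ i, MemLp (fun ω => v ω i) 2 μ)
    -- zero means
    (hnmean : ∀ p, ∫ ω, n p ω ∂μ = 0)
    (hndmean : ∫ ω, nd ω ∂μ = 0)
    (humean : ∀ i, ∫ ω, u ω i ∂μ = 0)
    (hvmean : ∀ i, ∫ ω, v ω i ∂μ = 0)
    -- second moments of the noises
    (σ2 σd2 : ℝ)
    (hσ : ∀ p, ∫ ω, n p ω * star (n p ω) ∂μ = (σ2 : ℂ))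
    (hnuncorr : ∫ ω, n 0 ω * star (n 1 ω) ∂μ = 0)
    (hσd : ∫ ω, nd ω * star (nd ω) ∂μ = (σd2 : ℂ))
    -- covariance matrices of the IRS channel vectors
    (Ru Rv : Matrix (Fin N) (Fin N) ℂ)
    (hRu : ∀ i j, Ru i j = ∫ ω, u ω i * star (u ω j) ∂μ)
    (hRv : ∀ i j, Rv i j = ∫ ω, v ω i * star (v ω j) ∂μ)
    -- entrywise expectations of the phase-shift matrices
    (EΦ : Fin 2 → Matrix (Fin N) (Fin N) ℂ)
    (hEΦ : ∀ p i j, EΦ p i j = ∫ ω, Φ p ω i j ∂μ)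
    -- mutual independence of the family (u, v, Φ₁, Φ₂, n₁, n₂, n_d):
    -- the joint law is the product of the individual laws
    (hindep :
      μ.map (fun ω => (u ω, v ω, Φ 0 ω, Φ 1 ω, n 0 ω, n 1 ω, nd ω)) =
        (μ.map u).prod ((μ.map v).prod ((μ.map (Φ 0)).prod ((μ.map (Φ 1)).prod
          ((μ.map (n 0)).prod ((μ.map (n 1)).prod (μ.map nd))))))) :
    -- (i) cross-correlation
    (∫ ω, t 0 ω * star (t 1 ω) ∂μ
        = (Ru * (EΦ 1)ᴴ * Rv * EΦ 0).trace + (σd2 : ℂ)) ∧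
    -- (ii) variance of each sample
    (∀ l : Fin 2, ∫ ω, t l ω * star (t l ω) ∂μ
        = (∫ ω, (Ru * (Φ l ω)ᴴ * Rv * Φ l ω).trace ∂μ) + (σd2 : ℂ) + (σ2 : ℂ)) ∧
    -- consequence: the correlation coefficient
    (∀ l : Fin 2,
      (∫ ω, t 0 ω * star (t 1 ω) ∂μ) / (∫ ω, t l ω * star (t l ω) ∂μ)
        = ((Ru * (EΦ 1)ᴴ * Rv * EΦ 0).trace + (σd2 : ℂ))
          / ((∫ ω, (Ru * (Φ l ω)ᴴ * Rv * Φ l ω).trace ∂μ) + (σd2 : ℂ) + (σ2 : ℂ))) :=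
  crossCorrelation_variance_IRS_samples_direct_subtracted_general μ u v Φ n nd t ht hum hvm hΦm hnm
    hndm hΦdiag hΦunit hnL2 hndL2 huL2 hvL2 hndmean humean σ2 σd2 hσ hnuncorr hσd Ru Rv hRu hRv EΦ
    hEΦ hindep
end

section
/- Correlation of consecutive probings under random phase shifts, direct path subtracted (Lemma 3, RPS case). In the direct-path-subtracted model with samples t_p = star v ⬝ᵥ (Φ_p.mulVec u) + (n_p − n_d), suppose Φ_p(ω) is the diagonal matrix with diagonal entries exp(I · φ_{p,n}(ω)), where the 2N real random variables φ_{p,n} (p ∈ {1,2}, n ∈ Fin N) are mutually independent, each uniform on (−π, π), and are independent of (u, v, n₁, n₂, n_d). Assume (u, v, n₁, n₂, n_d) mutually independent, all (entrywise) zero-mean and square-integrable, E[|n₁|²] = E[|n₂|²] = σ², E[n₁ · conj(n₂)] = 0, E[|n_d|²] = σ_d². Then the correlation coefficient ρ = E[t₁ · conj(t₂)] / E[|t_l|²] equals σ_d² / (Σ_{n} R_u n n · R_v n n + σ_d² + σ²). -/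
/-!
Write `t_p = ∑ᵢ e^{iφ_{p,i}} uᵢ conj(vᵢ) + (n_p - n_d)` and expand `E[t_p conj(t_q)]`
sesquilinearly; every term is square integrable because `u` and `v` are independent. A product
in which a phase factor `e^{iφ}` is not cancelled by its own conjugate has mean zero, since that
phase is independent of the rest of the product and `E[e^{iφ}] = 0` for a uniform phase. Hence
only the diagonal path terms with `p = q` survive, each losing its phase and contributing
`E|uᵢ|² E|vᵢ|²`, and the noise contributes `E[n_p conj(n_q)] + σ_d²`, its cross terms with the
centred, independent `n_d` vanishing. For `p ≠ q` only `σ_d²` is left: the direct-path noise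
shared by both probings.
-/

open MeasureTheory ProbabilityTheory Matrix Complex Real

section CrossCorrelation

variable {Ω : Type*} [MeasurableSpace Ω]

noncomputable def crossCorr (μ : Measure Ω) (X Y : Ω → ℂ) : ℂ := ∫ ω, X ω * star (Y ω) ∂μ

variable {μ : Measure Ω}

section Sesquilinear

variable {X Y Z : Ω → ℂ}

lemma star_crossCorr (X Y : Ω → ℂ) : star (crossCorr μ X Y) = crossCorr μ Y X := by
  simp only [crossCorr, star_def, ← integral_conj, map_mul, conj_conj, mul_comm]

lemma integrable_mul_star (hX : MemLp X 2 μ) (hY : MemLp Y 2 μ) :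
    Integrable (fun ω => X ω * star (Y ω)) μ :=
  hX.integrable_mul hY.star

lemma crossCorr_add_left (hX : MemLp X 2 μ) (hY : MemLp Y 2 μ) (hZ : MemLp Z 2 μ) :
    crossCorr μ (X + Y) Z = crossCorr μ X Z + crossCorr μ Y Z := by
  simp only [crossCorr, Pi.add_apply, add_mul]
  exact integral_add (integrable_mul_star hX hZ) (integrable_mul_star hY hZ)

lemma crossCorr_add_right (hX : MemLp X 2 μ) (hY : MemLp Y 2 μ) (hZ : MemLp Z 2 μ) :
    crossCorr μ X (Y + Z) = crossCorr μ X Y + crossCorr μ X Z := by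
  rw [← star_crossCorr, crossCorr_add_left hY hZ hX, star_add, star_crossCorr, star_crossCorr]

lemma crossCorr_sub_left (hX : MemLp X 2 μ) (hY : MemLp Y 2 μ) (hZ : MemLp Z 2 μ) :
    crossCorr μ (X - Y) Z = crossCorr μ X Z - crossCorr μ Y Z := by
  simp only [crossCorr, Pi.sub_apply, sub_mul]
  exact integral_sub (integrable_mul_star hX hZ) (integrable_mul_star hY hZ)

lemma crossCorr_sub_right (hX : MemLp X 2 μ) (hY : MemLp Y 2 μ) (hZ : MemLp Z 2 μ) :
    crossCorr μ X (Y - Z) = crossCorr μ X Y - crossCorr μ X Z := by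
  rw [← star_crossCorr, crossCorr_sub_left hY hZ hX, star_sub, star_crossCorr, star_crossCorr]

lemma crossCorr_sum_left {ι : Type*} (s : Finset ι) {X : ι → Ω → ℂ}
    (hX : ∀ i ∈ s, MemLp (X i) 2 μ) (hZ : MemLp Z 2 μ) :
    crossCorr μ (fun ω => ∑ i ∈ s, X i ω) Z = ∑ i ∈ s, crossCorr μ (X i) Z := by
  simp only [crossCorr, Finset.sum_mul]
  exact integral_finsetSum s fun i hi => integrable_mul_star (hX i hi) hZ

lemma crossCorr_sum_right {ι : Type*} (s : Finset ι) {Y : ι → Ω → ℂ}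
    (hX : MemLp X 2 μ) (hY : ∀ i ∈ s, MemLp (Y i) 2 μ) :
    crossCorr μ X (fun ω => ∑ i ∈ s, Y i ω) = ∑ i ∈ s, crossCorr μ X (Y i) := by
  rw [← star_crossCorr, crossCorr_sum_left s hY hX, star_sum]
  simp only [star_crossCorr]

end Sesquilinear

section Independence

variable {X Y Z : Ω → ℂ}

lemma crossCorr_eq_zero_of_indepFun_left (h : IndepFun X Y μ) (hX : AEStronglyMeasurable X μ)
    (hY : AEStronglyMeasurable Y μ) (hX0 : ∫ ω, X ω ∂μ = 0) : crossCorr μ X Y = 0 := by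
  have h' : IndepFun X (fun ω => star (Y ω)) μ :=
    h.comp measurable_id continuous_star.measurable
  rw [crossCorr, h'.integral_fun_mul_eq_mul_integral hX hY.star, hX0, zero_mul]

lemma crossCorr_eq_zero_of_indepFun_right (h : IndepFun X Y μ) (hX : AEStronglyMeasurable X μ)
    (hY : AEStronglyMeasurable Y μ) (hY0 : ∫ ω, Y ω ∂μ = 0) : crossCorr μ X Y = 0 := by
  rw [← star_crossCorr, crossCorr_eq_zero_of_indepFun_left h.symm hY hX hY0, star_zero]

lemma crossCorr_sub_sub_of_indepFun (hXZ : IndepFun X Z μ) (hYZ : IndepFun Y Z μ)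
    (hX : MemLp X 2 μ) (hY : MemLp Y 2 μ) (hZ : MemLp Z 2 μ) (hZ0 : ∫ ω, Z ω ∂μ = 0) :
    crossCorr μ (fun ω => X ω - Z ω) (fun ω => Y ω - Z ω)
      = crossCorr μ X Y + crossCorr μ Z Z := by
  change crossCorr μ (X - Z) (Y - Z) = _
  rw [crossCorr_sub_left hX hZ (hY.sub hZ), crossCorr_sub_right hX hY hZ,
    crossCorr_sub_right hZ hY hZ, crossCorr_eq_zero_of_indepFun_right hXZ hX.1 hZ.1 hZ0,
    crossCorr_eq_zero_of_indepFun_left hYZ.symm hZ.1 hY.1 hZ0]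
  ring

lemma ProbabilityTheory.IndepFun.memLp_two_mul_s4 {𝕜 : Type*} [RCLike 𝕜] {X Y : Ω → 𝕜}
    (h : IndepFun X Y μ) (hX : MemLp X 2 μ) (hY : MemLp Y 2 μ) : MemLp (X * Y) 2 μ := by
  rw [memLp_two_iff_integrable_sq_norm (hX.1.mul hY.1)]
  have hXY : IndepFun (fun ω => ‖X ω‖ ^ 2) (fun ω => ‖Y ω‖ ^ 2) μ :=
    h.comp (continuous_norm.pow 2).measurable (continuous_norm.pow 2).measurable
  simp only [Pi.mul_apply, norm_mul, mul_pow]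
  exact hXY.integrable_mul ((memLp_two_iff_integrable_sq_norm hX.1).1 hX)
      ((memLp_two_iff_integrable_sq_norm hY.1).1 hY)

lemma crossCorr_mul_star_self_of_indepFun (h : IndepFun X Y μ) (hX : AEStronglyMeasurable X μ)
    (hY : AEStronglyMeasurable Y μ) :
    crossCorr μ (fun ω => X ω * star (Y ω)) (fun ω => X ω * star (Y ω))
      = crossCorr μ X X * crossCorr μ Y Y := by
  have hXY : IndepFun (fun ω => X ω * star (X ω)) (fun ω => Y ω * star (Y ω)) μ :=
    h.comp (φ := fun x => x * star x) (ψ := fun y => y * star y) (by fun_prop) (by fun_prop)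
  rw [crossCorr, crossCorr, crossCorr,
    ← hXY.integral_fun_mul_eq_mul_integral (hX.mul hX.star) (hY.mul hY.star)]
  congr 1
  funext ω
  simp only [star_mul', star_star]
  ring

lemma map_eq_and_indepFun_of_map_prod_eq_prod [IsProbabilityMeasure μ] {α β : Type*}
    [MeasurableSpace α] [MeasurableSpace β] {X : Ω → α} {Y : Ω → β} (hX : Measurable X)
    (hY : Measurable Y) {ν : Measure β} [SFinite ν]
    (h : μ.map (fun ω => (X ω, Y ω)) = (μ.map X).prod ν) : μ.map Y = ν ∧ IndepFun X Y μ := by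
  have : IsProbabilityMeasure (μ.map X) := Measure.isProbabilityMeasure_map hX.aemeasurable
  have hY' : μ.map Y = ν := by rw [← Measure.snd_map_prodMk hX, h, Measure.snd_prod]
  exact ⟨hY', (indepFun_iff_map_prod_eq_prod_map_map hX.aemeasurable hY.aemeasurable).2
    (hY' ▸ h)⟩

end Independence

section PhaseShift

variable {θ θ' : Ω → ℝ} {a b Z : Ω → ℂ}

lemma isUniform_Ioo_neg_pi_pi_iff :
    pdf.IsUniform θ (Set.Ioo (-π) π) μ ↔
      μ.map θ = (ENNReal.ofReal (2 * π))⁻¹ • volume.restrict (Set.Ioo (-π) π) := by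
  rw [pdf.IsUniform, ProbabilityTheory.cond, Real.volume_Ioo, sub_neg_eq_add, two_mul]

lemma integral_cexp_I_mul_eq_zero (hθ : AEMeasurable θ μ)
    (hunif : pdf.IsUniform θ (Set.Ioo (-π) π) μ) : ∫ ω, exp (I * θ ω) ∂μ = 0 := by
  have hexp : AEStronglyMeasurable (fun x : ℝ => exp (I * x)) (μ.map θ) := by fun_prop
  rw [← integral_map hθ hexp, isUniform_Ioo_neg_pi_pi_iff.1 hunif, integral_smul_measure,
    ← integral_Ioc_eq_integral_Ioo, ← intervalIntegral.integral_of_le (by linarith [pi_pos]),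
    integral_exp_mul_complex I_ne_zero]
  simp [mul_comm I, Complex.exp_neg]

lemma MeasureTheory.MemLp.cexp_I_mul {p : ENNReal} (ha : MemLp a p μ)
    (hθ : AEMeasurable θ μ) : MemLp (fun ω => exp (I * θ ω) * a ω) p μ := by
  have hexp : Measurable fun x : ℝ => exp (I * x) := by fun_prop
  have he : AEStronglyMeasurable (fun ω => exp (I * θ ω)) μ :=
    (hexp.comp_aemeasurable hθ).aestronglyMeasurable
  exact ha.of_le (he.mul ha.1) (ae_of_all _ fun ω => by simp [norm_exp_I_mul_ofReal])

lemma crossCorr_cexp_I_mul_self (θ : Ω → ℝ) (a b : Ω → ℂ) :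
    crossCorr μ (fun ω => exp (I * θ ω) * a ω) (fun ω => exp (I * θ ω) * b ω)
      = crossCorr μ a b := by
  have hunit : ∀ x : ℝ, exp (I * x) * star (exp (I * x)) = 1 := fun x => by
    rw [star_def, mul_conj, normSq_eq_norm_sq, norm_exp_I_mul_ofReal]; simp
  simp only [crossCorr, star_mul']
  congr 1
  funext ω
  linear_combination (a ω * star (b ω)) * hunit (θ ω)

lemma crossCorr_cexp_I_mul_left_eq_zero (hθ : AEMeasurable θ μ)
    (hunif : pdf.IsUniform θ (Set.Ioo (-π) π) μ)
    (hind : IndepFun θ (fun ω => (a ω, Z ω)) μ) (ha : AEStronglyMeasurable a μ)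
    (hZ : AEStronglyMeasurable Z μ) :
    crossCorr μ (fun ω => exp (I * θ ω) * a ω) Z = 0 := by
  have key := hind.integral_fun_comp_mul_comp (f := fun x : ℝ => exp (I * x))
    (g := fun z : ℂ × ℂ => z.1 * star z.2) hθ (ha.aemeasurable.prodMk hZ.aemeasurable)
    (by fun_prop) (by fun_prop)
  simp only [crossCorr, mul_assoc]
  rw [key, integral_cexp_I_mul_eq_zero hθ hunif, zero_mul]

lemma crossCorr_cexp_I_mul_eq_zero_of_indepFun (hθ : AEMeasurable θ μ)
    (hθ' : AEMeasurable θ' μ) (hunif : pdf.IsUniform θ (Set.Ioo (-π) π) μ)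
    (hθθ' : IndepFun θ θ' μ) (hind : IndepFun (fun ω => (θ ω, θ' ω)) (fun ω => (a ω, b ω)) μ)
    (ha : AEStronglyMeasurable a μ) (hb : AEStronglyMeasurable b μ) :
    crossCorr μ (fun ω => exp (I * θ ω) * a ω) (fun ω => exp (I * θ' ω) * b ω) = 0 := by
  have hphase : ∫ ω, exp (I * θ ω) * star (exp (I * θ' ω)) ∂μ = 0 := by
    rw [hθθ'.integral_fun_comp_mul_comp (f := fun x : ℝ => exp (I * x))
      (g := fun x : ℝ => star (exp (I * x))) hθ hθ' (by fun_prop) (by fun_prop),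
      integral_cexp_I_mul_eq_zero hθ hunif, zero_mul]
  calc crossCorr μ (fun ω => exp (I * θ ω) * a ω) (fun ω => exp (I * θ' ω) * b ω)
      = ∫ ω, (exp (I * θ ω) * star (exp (I * θ' ω))) * (a ω * star (b ω)) ∂μ := by
        simp only [crossCorr, star_mul']
        congr 1
        funext ω
        ring
    _ = (∫ ω, exp (I * θ ω) * star (exp (I * θ' ω)) ∂μ) * ∫ ω, a ω * star (b ω) ∂μ :=
        hind.integral_fun_comp_mul_comp
          (f := fun x : ℝ × ℝ => exp (I * x.1) * star (exp (I * x.2)))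
          (g := fun z : ℂ × ℂ => z.1 * star z.2) (hθ.prodMk hθ')
          (ha.aemeasurable.prodMk hb.aemeasurable) (by fun_prop) (by fun_prop)
    _ = 0 := by rw [hphase, zero_mul]

end PhaseShift

section RandomPhaseShifts

variable {ι κ : Type*} {θ : ι → κ → Ω → ℝ}

lemma crossCorr_cexp_I_mul_of_iIndepFun [DecidableEq ι] [DecidableEq κ] {a : κ → Ω → ℂ}
    (hθm : ∀ p i, Measurable (θ p i))
    (hθ : iIndepFun (fun k : ι × κ => θ k.1 k.2) μ)
    (hunif : ∀ p i, pdf.IsUniform (θ p i) (Set.Ioo (-π) π) μ)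
    (hind : IndepFun (fun ω (k : ι × κ) => θ k.1 k.2 ω) (fun ω i => a i ω) μ)
    (ha : ∀ i, AEStronglyMeasurable (a i) μ) (p q : ι) (i j : κ) :
    crossCorr μ (fun ω => exp (I * θ p i ω) * a i ω) (fun ω => exp (I * θ q j ω) * a j ω)
      = if (p, i) = (q, j) then crossCorr μ (a i) (a i) else 0 := by
  split_ifs with h
  · obtain ⟨rfl, rfl⟩ := Prod.mk.inj h
    exact crossCorr_cexp_I_mul_self _ _ _
  · refine crossCorr_cexp_I_mul_eq_zero_of_indepFun (hθm p i).aemeasurable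
      (hθm q j).aemeasurable (hunif p i) (hθ.indepFun h) ?_ (ha i) (ha j)
    exact hind.comp (φ := fun x : ι × κ → ℝ => (x (p, i), x (q, j)))
      (ψ := fun y : κ → ℂ => (y i, y j)) (by fun_prop) (by fun_prop)

theorem crossCorr_sum_cexp_I_mul_add [Fintype κ] [DecidableEq ι] [DecidableEq κ]
    {a : κ → Ω → ℂ} {w : ι → Ω → ℂ}
    (hθm : ∀ p i, Measurable (θ p i)) (hθ : iIndepFun (fun k : ι × κ => θ k.1 k.2) μ)
    (hunif : ∀ p i, pdf.IsUniform (θ p i) (Set.Ioo (-π) π) μ)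
    (hind : ∀ q, IndepFun (fun ω (k : ι × κ) => θ k.1 k.2 ω)
      (fun ω => (fun i => a i ω, w q ω)) μ)
    (ha : ∀ i, MemLp (a i) 2 μ) (hw : ∀ p, MemLp (w p) 2 μ) (p q : ι) :
    crossCorr μ (fun ω => ∑ i, exp (I * θ p i ω) * a i ω + w p ω)
        (fun ω => ∑ j, exp (I * θ q j ω) * a j ω + w q ω)
      = (if p = q then ∑ i, crossCorr μ (a i) (a i) else 0) + crossCorr μ (w p) (w q) := by
  set P : ι → κ → Ω → ℂ := fun p i ω => exp (I * θ p i ω) * a i ω with hPdef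
  have hP : ∀ p i, MemLp (P p i) 2 μ := fun p i => (ha i).cexp_I_mul (hθm p i).aemeasurable
  have hS : ∀ p, MemLp (fun ω => ∑ i, P p i ω) 2 μ := fun p =>
    memLp_finsetSum _ fun i _ => hP p i
  have hcross : ∀ p i q, crossCorr μ (P p i) (w q) = 0 := fun p i q =>
    crossCorr_cexp_I_mul_left_eq_zero (hθm p i).aemeasurable (hunif p i)
      ((hind q).comp (φ := fun x : ι × κ → ℝ => x (p, i))
        (ψ := fun y : (κ → ℂ) × ℂ => (y.1 i, y.2)) (by fun_prop) (by fun_prop))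
      (ha i).1 (hw q).1
  have hsignal : crossCorr μ (fun ω => ∑ i, P p i ω) (fun ω => ∑ j, P q j ω)
      = if p = q then ∑ i, crossCorr μ (a i) (a i) else 0 := by
    rw [crossCorr_sum_left _ (fun i _ => hP p i) (hS q)]
    simp_rw [crossCorr_sum_right _ (hP p _) (fun j _ => hP q j), hPdef,
      crossCorr_cexp_I_mul_of_iIndepFun (a := a) hθm hθ hunif
        ((hind q).comp measurable_id measurable_fst) (fun i => (ha i).1), Prod.mk.injEq]
    split_ifs with hpq <;> simp [hpq]
  have hnoise : crossCorr μ (w p) (fun ω => ∑ j, P q j ω) = 0 := by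
    rw [← star_crossCorr, crossCorr_sum_left _ (fun j _ => hP q j) (hw p)]
    simp [hcross]
  change crossCorr μ ((fun ω => ∑ i, P p i ω) + w p) ((fun ω => ∑ j, P q j ω) + w q) = _
  rw [crossCorr_add_left (hS p) (hw p) ((hS q).add (hw q)),
    crossCorr_add_right (hS p) (hS q) (hw q), crossCorr_add_right (hw p) (hS q) (hw q), hsignal,
    hnoise, crossCorr_sum_left _ (fun i _ => hP p i) (hw q)]
  simp [hcross]

theorem crossCorr_sum_cexp_I_mul_mul_star_add_sub [Fintype κ] [DecidableEq ι] [DecidableEq κ]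
    {u v : Ω → κ → ℂ} {n : ι → Ω → ℂ} {nd : Ω → ℂ}
    (hθm : ∀ p i, Measurable (θ p i)) (hθ : iIndepFun (fun k : ι × κ => θ k.1 k.2) μ)
    (hunif : ∀ p i, pdf.IsUniform (θ p i) (Set.Ioo (-π) π) μ)
    (hind : ∀ q, IndepFun (fun ω (k : ι × κ) => θ k.1 k.2 ω)
      (fun ω => (fun i => u ω i * star (v ω i), n q ω - nd ω)) μ)
    (huv : ∀ i, IndepFun (fun ω => u ω i) (fun ω => v ω i) μ)
    (hnnd : ∀ p, IndepFun (n p) nd μ)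
    (hu : ∀ i, MemLp (fun ω => u ω i) 2 μ) (hv : ∀ i, MemLp (fun ω => v ω i) 2 μ)
    (hn : ∀ p, MemLp (n p) 2 μ) (hnd : MemLp nd 2 μ) (hnd0 : ∫ ω, nd ω ∂μ = 0) (p q : ι) :
    crossCorr μ (fun ω => ∑ i, exp (I * θ p i ω) * (u ω i * star (v ω i)) + (n p ω - nd ω))
        (fun ω => ∑ j, exp (I * θ q j ω) * (u ω j * star (v ω j)) + (n q ω - nd ω))
      = (if p = q then ∑ i, crossCorr μ (fun ω => u ω i) (fun ω => u ω i) *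
          crossCorr μ (fun ω => v ω i) (fun ω => v ω i) else 0)
        + crossCorr μ (n p) (n q) + crossCorr μ nd nd := by
  have ha : ∀ i, MemLp (fun ω => u ω i * star (v ω i)) 2 μ := fun i =>
    ((huv i).comp measurable_id continuous_star.measurable).memLp_two_mul_s4 (hu i) (hv i).star
  rw [crossCorr_sum_cexp_I_mul_add (a := fun i ω => u ω i * star (v ω i))
      (w := fun p ω => n p ω - nd ω) hθm hθ hunif hind ha (fun p => (hn p).sub hnd),
    crossCorr_sub_sub_of_indepFun (hnnd p) (hnnd q) (hn p) (hn q) hnd hnd0, ← add_assoc,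
    Finset.sum_congr rfl fun i _ => crossCorr_mul_star_self_of_indepFun (huv i) (hu i).1 (hv i).1]

end RandomPhaseShifts

end CrossCorrelation

lemma star_dotProduct_diagonal_mulVec {R ι : Type*} [CommSemiring R] [StarRing R] [Fintype ι]
    [DecidableEq ι] (d u v : ι → R) :
    star v ⬝ᵥ (diagonal d *ᵥ u) = ∑ i, d i * (u i * star (v i)) := by
  simp only [dotProduct, mulVec_diagonal, Pi.star_apply]
  exact Finset.sum_congr rfl fun i _ => by ring

theorem correlation_consecutive_probings_RPS_direct_subtracted_general
    {Ω : Type*} [MeasurableSpace Ω] (μ : Measure Ω) [IsProbabilityMeasure μ]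
    {N : ℕ}
    (u v : Ω → Fin N → ℂ)
    (φ : Fin 2 → Fin N → Ω → ℝ)
    (n : Fin 2 → Ω → ℂ) (nd : Ω → ℂ)
    (t : Fin 2 → Ω → ℂ)
    (ht : ∀ p ω, t p ω =
        star (v ω) ⬝ᵥ
            ((Matrix.diagonal fun i => Complex.exp (Complex.I * (φ p i ω : ℂ))).mulVec (u ω))
        + (n p ω - nd ω))
    -- measurability
    (hum : Measurable u) (hvm : Measurable v)
    (hφm : ∀ p i, Measurable (φ p i)) (hnm : ∀ p, Measurable (n p)) (hndm : Measurable nd)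
    -- the 2N phases are mutually independent and uniform on (-π, π)
    (hφindep : iIndepFun
        (fun q : Fin 2 × Fin N => φ q.1 q.2) μ)
    (hφunif : ∀ p i, μ.map (φ p i)
        = (ENNReal.ofReal (2 * π))⁻¹ • (volume.restrict (Set.Ioo (-π) π)))
    -- the phase family is independent of (u, v, n₁, n₂, n_d)
    (hφrest : IndepFun (fun ω (q : Fin 2 × Fin N) => φ q.1 q.2 ω)
        (fun ω => (u ω, v ω, n 0 ω, n 1 ω, nd ω)) μ)
    -- (u, v, n₁, n₂, n_d) mutually independent: joint law = product of laws
    (hindep : μ.map (fun ω => (u ω, v ω, n 0 ω, n 1 ω, nd ω)) =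
        (μ.map u).prod ((μ.map v).prod
          ((μ.map (n 0)).prod ((μ.map (n 1)).prod (μ.map nd)))))
    -- square integrability
    (hnL2 : ∀ p, MemLp (n p) 2 μ) (hndL2 : MemLp nd 2 μ)
    (huL2 : ∀ i, MemLp (fun ω => u ω i) 2 μ)
    (hvL2 : ∀ i, MemLp (fun ω => v ω i) 2 μ)
    -- zero means
    (hndmean : ∫ ω, nd ω ∂μ = 0)
    -- second moments
    (σ2 σd2 : ℝ)
    (hσ : ∀ p, ∫ ω, n p ω * star (n p ω) ∂μ = (σ2 : ℂ))
    (hnuncorr : ∫ ω, n 0 ω * star (n 1 ω) ∂μ = 0)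
    (hσd : ∫ ω, nd ω * star (nd ω) ∂μ = (σd2 : ℂ))
    -- covariance matrices of the IRS channel vectors
    (Ru Rv : Matrix (Fin N) (Fin N) ℂ)
    (hRu : ∀ i j, Ru i j = ∫ ω, u ω i * star (u ω j) ∂μ)
    (hRv : ∀ i j, Rv i j = ∫ ω, v ω i * star (v ω j) ∂μ) :
    -- correlation coefficient
    ∀ l : Fin 2,
      (∫ ω, t 0 ω * star (t 1 ω) ∂μ) / (∫ ω, t l ω * star (t l ω) ∂μ)
        = (σd2 : ℂ) / ((∑ i, Ru i i * Rv i i) + (σd2 : ℂ) + (σ2 : ℂ)) := by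
  intro l
  obtain ⟨hv, hu⟩ := map_eq_and_indepFun_of_map_prod_eq_prod hum (by fun_prop) hindep
  obtain ⟨hn0, -⟩ := map_eq_and_indepFun_of_map_prod_eq_prod hvm (by fun_prop) hv
  obtain ⟨hn1, hn0nd⟩ := map_eq_and_indepFun_of_map_prod_eq_prod (hnm 0) (by fun_prop) hn0
  obtain ⟨-, hn1nd⟩ := map_eq_and_indepFun_of_map_prod_eq_prod (hnm 1) hndm hn1
  have huv : ∀ i, IndepFun (fun ω => u ω i) (fun ω => v ω i) μ := fun i =>
    (hu.comp measurable_id measurable_fst).comp (measurable_pi_apply i) (measurable_pi_apply i)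
  have hnnd : ∀ p, IndepFun (n p) nd μ :=
    Fin.forall_fin_two.2 ⟨hn0nd.comp measurable_id measurable_snd, hn1nd⟩
  have ht' : ∀ p, t p = fun ω =>
      ∑ i, exp (I * φ p i ω) * (u ω i * star (v ω i)) + (n p ω - nd ω) := fun p =>
    funext fun ω => by rw [ht, star_dotProduct_diagonal_mulVec]
  have hind : ∀ q, IndepFun (fun ω (k : Fin 2 × Fin N) => φ k.1 k.2 ω)
      (fun ω => (fun i => u ω i * star (v ω i), n q ω - nd ω)) μ := by
    refine Fin.forall_fin_two.2 ⟨?_, ?_⟩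
    · exact hφrest.comp measurable_id (ψ := fun r : (Fin N → ℂ) × (Fin N → ℂ) × ℂ × ℂ × ℂ =>
        (fun i => r.1 i * star (r.2.1 i), r.2.2.1 - r.2.2.2.2)) (by fun_prop)
    · exact hφrest.comp measurable_id (ψ := fun r : (Fin N → ℂ) × (Fin N → ℂ) × ℂ × ℂ × ℂ =>
        (fun i => r.1 i * star (r.2.1 i), r.2.2.2.1 - r.2.2.2.2)) (by fun_prop)
  have hcorr := crossCorr_sum_cexp_I_mul_mul_star_add_sub hφm hφindep
    (fun p i => isUniform_Ioo_neg_pi_pi_iff.2 (hφunif p i)) hind huv hnnd huL2 hvL2 hnL2 hndL2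
    hndmean
  change crossCorr μ (t 0) (t 1) / crossCorr μ (t l) (t l) = _
  rw [ht', ht', ht', hcorr, hcorr, if_neg zero_ne_one, if_pos rfl]
  simp only [crossCorr, ← hRu, ← hRv, hnuncorr, hσ, hσd]
  ring

/-- **Lemma 3, RPS case** (correlation of consecutive probings under random phase
shifts, direct path subtracted).  The samples are
`t p ω = (v ω)ᴴ ⬝ Φ p ω ⬝ u ω + (n p ω - n_d ω)` with `Φ p ω` the diagonal
matrix with entries `exp (I * φ p i ω)`. -/
theorem correlation_consecutive_probings_RPS_direct_subtracted
    {Ω : Type*} [MeasurableSpace Ω] (μ : Measure Ω) [IsProbabilityMeasure μ]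
    {N : ℕ} (hN : 1 ≤ N)
    (u v : Ω → Fin N → ℂ)
    (φ : Fin 2 → Fin N → Ω → ℝ)
    (n : Fin 2 → Ω → ℂ) (nd : Ω → ℂ)
    (t : Fin 2 → Ω → ℂ)
    (ht : ∀ p ω, t p ω =
        star (v ω) ⬝ᵥ
            ((Matrix.diagonal fun i => Complex.exp (Complex.I * (φ p i ω : ℂ))).mulVec (u ω))
        + (n p ω - nd ω))
    -- measurability
    (hum : Measurable u) (hvm : Measurable v)
    (hφm : ∀ p i, Measurable (φ p i)) (hnm : ∀ p, Measurable (n p)) (hndm : Measurable nd)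
    -- the 2N phases are mutually independent and uniform on (-π, π)
    (hφindep : iIndepFun
        (fun q : Fin 2 × Fin N => φ q.1 q.2) μ)
    (hφunif : ∀ p i, μ.map (φ p i)
        = (ENNReal.ofReal (2 * π))⁻¹ • (volume.restrict (Set.Ioo (-π) π)))
    -- the phase family is independent of (u, v, n₁, n₂, n_d)
    (hφrest : IndepFun (fun ω (q : Fin 2 × Fin N) => φ q.1 q.2 ω)
        (fun ω => (u ω, v ω, n 0 ω, n 1 ω, nd ω)) μ)
    -- (u, v, n₁, n₂, n_d) mutually independent: joint law = product of laws
    (hindep : μ.map (fun ω => (u ω, v ω, n 0 ω, n 1 ω, nd ω)) =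
        (μ.map u).prod ((μ.map v).prod
          ((μ.map (n 0)).prod ((μ.map (n 1)).prod (μ.map nd)))))
    -- square integrability
    (hnL2 : ∀ p, MemLp (n p) 2 μ) (hndL2 : MemLp nd 2 μ)
    (huL2 : ∀ i, MemLp (fun ω => u ω i) 2 μ)
    (hvL2 : ∀ i, MemLp (fun ω => v ω i) 2 μ)
    -- zero means
    (hnmean : ∀ p, ∫ ω, n p ω ∂μ = 0)
    (hndmean : ∫ ω, nd ω ∂μ = 0)
    (humean : ∀ i, ∫ ω, u ω i ∂μ = 0)
    (hvmean : ∀ i, ∫ ω, v ω i ∂μ = 0)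
    -- second moments
    (σ2 σd2 : ℝ)
    (hσ : ∀ p, ∫ ω, n p ω * star (n p ω) ∂μ = (σ2 : ℂ))
    (hnuncorr : ∫ ω, n 0 ω * star (n 1 ω) ∂μ = 0)
    (hσd : ∫ ω, nd ω * star (nd ω) ∂μ = (σd2 : ℂ))
    -- covariance matrices of the IRS channel vectors
    (Ru Rv : Matrix (Fin N) (Fin N) ℂ)
    (hRu : ∀ i j, Ru i j = ∫ ω, u ω i * star (u ω j) ∂μ)
    (hRv : ∀ i j, Rv i j = ∫ ω, v ω i * star (v ω j) ∂μ) :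
    -- correlation coefficient
    ∀ l : Fin 2,
      (∫ ω, t 0 ω * star (t 1 ω) ∂μ) / (∫ ω, t l ω * star (t l ω) ∂μ)
        = (σd2 : ℂ) / ((∑ i, Ru i i * Rv i i) + (σd2 : ℂ) + (σ2 : ℂ)) :=
  correlation_consecutive_probings_RPS_direct_subtracted_general μ u v φ n nd t ht hum hvm hφm hnm
    hndm hφindep hφunif hφrest hindep hnL2 hndL2 huL2 hvL2 hndmean σ2 σd2 hσ hnuncorr hσd Ru Rv hRu
    hRv
end
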